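/- Let G = (μ,V,W,E,P,f,g) be a maximal GCD graph with edge density δ > 0, and let s ≥ 1 and t ≥ C₆·s be real numbers. Assume that R♭(G) = ∅ and that E ⊆ {(v,w) ∈ V×W : L_t(v,w) ≥ 1/s}, where L_t(v,w) = ∑_{p prime, p | vw/gcd(v,w)², p > t} 1/p. Then there exists a GCD subgraph G' = (μ,V,W,E',P,f,g) of G such that q(G') ≥ q(G)/2 > 0 and E' ⊆ {(v,w) ∈ V×W : ∑_{p | vw/gcd(v,w)², p > t, p ∉ R(G)} 1/p ≥ 1/(2s)}. -/

import Mathlib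

/-!
For a prime `p ∈ R(G)` with `p > t`, membership in `R♯(G)` says that `q(G_{p^a,p^b}) < M q(G)`
for `a ≠ b`. Unwinding the quality, this bounds `μ(E_{p^a,p^b})` by
`M^κ μ(E) (x_a y_b)^θ p^{-κ|a-b|}`, where `κ = 1/(2+τ)`, `θ = 1 - κ`, `x_a = μ(V_{p^a})/μ(V)` and
`y_b = μ(W_{p^b})/μ(W)`. As all but a proportion `C₂/p` of `V` and of `W` sits on a single
valuation `k`, summing over `a ≠ b` shows that the edges with `v_p(v) ≠ v_p(w)`, i.e. with
`p ∣ vw/gcd(v,w)²`, have measure `O(M C₂ μ(E)/p)`.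

An edge losing more than `1/(2s)` of `L_t ≥ 1/s` to primes of `R(G)` has
`∑ 1/p ≥ 1/(2s)` over those primes, so double counting and `∑_{p>t} 1/p² ≤ 2/t` bound the
measure of such edges by `48 s M C₂ μ(E)/t ≤ μ(E)/100`. Deleting them keeps `V, W, P, f, g`
and costs at most a factor `(99/100)^{2+τ} ≥ 1/2` in quality.
-/

open Finset

/-- A (bipartite) GCD graph: a measure `μ` on `ℕ`, finite vertex sets `V, W` of positive
integers, an edge set `E ⊆ V × W`, a (finite) set of primes `P`, and exponent functions
`f, g` such that for every `p ∈ P`: `p^{f(p)} ∣ v` for all `v ∈ V`, `p^{g(p)} ∣ w` for all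
`w ∈ W`, and `p^{min(f(p),g(p))}` exactly divides `gcd(v, w)` for every edge `(v, w)`. -/
structure GCDGraph where
  mu : ℕ → ℝ
  mu_nonneg : ∀ n, 0 ≤ mu n
  V : Finset ℕ
  W : Finset ℕ
  V_pos : ∀ v ∈ V, 0 < v
  W_pos : ∀ w ∈ W, 0 < w
  E : Finset (ℕ × ℕ)
  E_sub : E ⊆ V ×ˢ W
  P : Finset ℕ
  P_prime : ∀ p ∈ P, p.Prime
  f : ℕ → ℕ
  g : ℕ → ℕ
  f_dvd : ∀ p ∈ P, ∀ v ∈ V, p ^ f p ∣ v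
  g_dvd : ∀ p ∈ P, ∀ w ∈ W, p ^ g p ∣ w
  gcd_exact : ∀ p ∈ P, ∀ e ∈ E,
    p ^ min (f p) (g p) ∣ Nat.gcd e.1 e.2 ∧ ¬ p ^ (min (f p) (g p) + 1) ∣ Nat.gcd e.1 e.2

namespace GCDGraph

/-- The measure of a finite set of integers: `μ(S) = ∑_{n ∈ S} μ(n)`. -/
noncomputable def muSet (mu : ℕ → ℝ) (S : Finset ℕ) : ℝ := ∑ n ∈ S, mu n

/-- The measure of a finite set of pairs: `μ(E) = ∑_{(n₁,n₂) ∈ E} μ(n₁) μ(n₂)`. -/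
noncomputable def muEdges (mu : ℕ → ℝ) (E : Finset (ℕ × ℕ)) : ℝ := ∑ e ∈ E, mu e.1 * mu e.2

/-- Edge density `δ = μ(E) / (μ(V) μ(W))` (equal to `0` when `μ(V) μ(W) = 0`,
by the Lean convention `x / 0 = 0`). -/
noncomputable def densityRaw (mu : ℕ → ℝ) (V W : Finset ℕ) (E : Finset (ℕ × ℕ)) : ℝ :=
  muEdges mu E / (muSet mu V * muSet mu W)

/-- The quality
`q = δ^{2+τ} μ(V) μ(W) ∏_{p ∈ P} p^{|f(p)-g(p)|} (1 - 1_{f(p)=g(p)≥1}/p)^{-2} (1 - p^{-1-τ/4})^{-3}`. -/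
noncomputable def qualityRaw (τ : ℝ) (mu : ℕ → ℝ) (V W : Finset ℕ) (E : Finset (ℕ × ℕ))
    (P : Finset ℕ) (f g : ℕ → ℕ) : ℝ :=
  densityRaw mu V W E ^ (2 + τ) * muSet mu V * muSet mu W *
    ∏ p ∈ P, ((p : ℝ) ^ (((f p : ℤ) - (g p : ℤ)).natAbs) *
      ((1 - (if f p = g p ∧ 1 ≤ f p then ((p : ℝ))⁻¹ else 0))⁻¹) ^ 2 *
      ((1 - (p : ℝ) ^ (-1 - τ / 4))⁻¹) ^ 3)

/-- The edge density of a GCD graph. -/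
noncomputable def density (G : GCDGraph) : ℝ := densityRaw G.mu G.V G.W G.E

/-- The quality of a GCD graph (with parameter `τ`). -/
noncomputable def quality (τ : ℝ) (G : GCDGraph) : ℝ :=
  qualityRaw τ G.mu G.V G.W G.E G.P G.f G.g

/-- `G'` is a GCD subgraph of `G`. -/
def IsSubgraph (G' G : GCDGraph) : Prop :=
  G'.mu = G.mu ∧ G'.V ⊆ G.V ∧ G'.W ⊆ G.W ∧ G'.E ⊆ G.E ∧ G.P ⊆ G'.P ∧
    (∀ p ∈ G.P, G'.f p = G.f p) ∧ (∀ p ∈ G.P, G'.g p = G.g p)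

/-- `G` is `(P,f,g)`-maximal: every GCD subgraph with the same multiplicative data has
quality at most `q(G)`. -/
def IsMaximal (τ : ℝ) (G : GCDGraph) : Prop :=
  ∀ G' : GCDGraph, IsSubgraph G' G → G'.P = G.P → quality τ G' ≤ quality τ G

/-- `R(G)`: the set of primes `p ∉ P` dividing `gcd(v,w)` for some edge `(v,w)`. -/
def R (G : GCDGraph) : Set ℕ :=
  {p | p.Prime ∧ p ∉ G.P ∧ ∃ e ∈ G.E, p ∣ Nat.gcd e.1 e.2}

/-- `S_{p^k}`: the subset of elements of `S` exactly divisible by `p^k`. -/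
def exactPart (S : Finset ℕ) (p k : ℕ) : Finset ℕ :=
  S.filter fun v => p ^ k ∣ v ∧ ¬ p ^ (k + 1) ∣ v

/-- `E_{p^k, p^ℓ} = E ∩ (V_{p^k} × W_{p^ℓ})`. -/
def edgesAt (G : GCDGraph) (p k l : ℕ) : Finset (ℕ × ℕ) :=
  G.E.filter fun e => e.1 ∈ exactPart G.V p k ∧ e.2 ∈ exactPart G.W p l

/-- The quality of the GCD subgraph `G_{p^k, p^ℓ}`, with vertex sets `V_{p^k}`, `W_{p^ℓ}`,
edges `E_{p^k,p^ℓ}`, prime set `P ∪ {p}` and `f, g` extended by `f(p) = k`, `g(p) = ℓ`. -/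
noncomputable def qualityAt (τ : ℝ) (G : GCDGraph) (p k l : ℕ) : ℝ :=
  qualityRaw τ G.mu (exactPart G.V p k) (exactPart G.W p l) (edgesAt G p k l)
    (insert p G.P) (Function.update G.f p k) (Function.update G.g p l)

noncomputable def C1 (τ : ℝ) : ℝ := 10 ^ 4 / τ
noncomputable def C2 (τ M : ℝ) : ℝ := 10 * M * C1 τ ^ 3
noncomputable def C3 (τ : ℝ) : ℝ := 10 ^ 3 * C1 τ ^ 3
noncomputable def C4 (τ M : ℝ) : ℝ := 10 ^ 10 * M ^ 2 * C2 τ M ^ 2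
noncomputable def C5 (τ M : ℝ) : ℝ := max (C3 τ) ((50 * Real.log (C4 τ M)) ^ 3)
noncomputable def C6 (τ M : ℝ) : ℝ :=
  max (C4 τ M) (max (10 ^ 4 * M * C2 τ M) (C2 τ M ^ (10 / τ)))
noncomputable def C7 (τ M : ℝ) : ℝ := C5 τ M ^ C6 τ M

/-- `R♯(G)`: those `p ∈ R(G)` admitting `k ≥ 0` with `μ(V_{p^k})/μ(V) ≥ 1 − C₂/p` and
`μ(W_{p^k})/μ(W) ≥ 1 − C₂/p`, and such that `q(G_{p^a,p^b}) < M q(G)` for all `a ≠ b`. -/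
def Rsharp (τ M : ℝ) (G : GCDGraph) : Set ℕ :=
  {p ∈ R G |
    (∃ k : ℕ, 1 - C2 τ M / (p : ℝ) ≤ muSet G.mu (exactPart G.V p k) / muSet G.mu G.V ∧
        1 - C2 τ M / (p : ℝ) ≤ muSet G.mu (exactPart G.W p k) / muSet G.mu G.W) ∧
    ∀ a b : ℕ, a ≠ b → qualityAt τ G p a b < M * quality τ G}

/-- `R♭(G) = R(G) \ R♯(G)`. -/
def Rflat (τ M : ℝ) (G : GCDGraph) : Set ℕ := R G \ Rsharp τ M G

/-- The neighbourhood `Γ_G(v) = {w ∈ W : (v,w) ∈ E}` of a left vertex. -/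
def nbhdOfV (G : GCDGraph) (v : ℕ) : Finset ℕ := G.W.filter fun w => (v, w) ∈ G.E

/-- The neighbourhood `Γ_G(w) = {v ∈ V : (v,w) ∈ E}` of a right vertex. -/
def nbhdOfW (G : GCDGraph) (w : ℕ) : Finset ℕ := G.V.filter fun v => (v, w) ∈ G.E

end GCDGraph

open GCDGraph

/-- `L_t(v,w) = ∑_{p | vw/gcd(v,w)², p > t} 1/p`. -/
noncomputable def Lfun (t : ℝ) (q r : ℕ) : ℝ :=
  ∑ p ∈ (q * r / Nat.gcd q r ^ 2).primeFactors.filter (fun p : ℕ => t < (p : ℝ)), (1 : ℝ) / p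

open scoped Classical in
/-- `∑_{p | vw/gcd(v,w)², p > t, p ∉ S} 1/p`. -/
noncomputable def LfunRes (t : ℝ) (S : Set ℕ) (q r : ℕ) : ℝ :=
  ∑ p ∈ (q * r / Nat.gcd q r ^ 2).primeFactors.filter
      (fun p : ℕ => t < (p : ℝ) ∧ p ∉ S), (1 : ℝ) / p

section

variable {u : ℝ}

lemma sum_pow_le_two_mul (hu₀ : 0 ≤ u) (hu : u ≤ 1 / 2) {J : Finset ℕ} (hJ : 0 ∉ J) :
    ∑ j ∈ J, u ^ j ≤ 2 * u := by
  have hsub : J ⊆ Ico 1 (J.sup id + 1) := fun j hj => by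
    have := le_sup (f := id) hj
    have : j ≠ 0 := fun h => hJ (h ▸ hj)
    simp only [mem_Ico, id] at *
    omega
  calc ∑ j ∈ J, u ^ j ≤ ∑ j ∈ Ico 1 (J.sup id + 1), u ^ j :=
        sum_le_sum_of_subset_of_nonneg hsub fun j _ _ => pow_nonneg hu₀ j
    _ ≤ u ^ 1 / (1 - u) := geom_sum_Ico_le_of_lt_one hu₀ (by linarith)
    _ ≤ 2 * u := by rw [pow_one, div_le_iff₀ (by linarith)]; nlinarith

lemma sum_erase_pow_natAbs_sub_le (hu₀ : 0 ≤ u) (hu : u ≤ 1 / 2) (T : Finset ℕ) (a : ℕ) :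
    ∑ b ∈ T.erase a, u ^ ((a : ℤ) - b).natAbs ≤ 4 * u := by
  classical
  have side : ∀ (F : Finset ℕ) (g : ℕ → ℕ), Set.InjOn g F →
      (∀ b ∈ F, g b ≠ 0 ∧ ((a : ℤ) - b).natAbs = g b) →
      ∑ b ∈ F, u ^ ((a : ℤ) - b).natAbs ≤ 2 * u := by
    intro F g hg hF
    calc ∑ b ∈ F, u ^ ((a : ℤ) - b).natAbs = ∑ b ∈ F, u ^ g b :=
          sum_congr rfl fun b hb => by rw [(hF b hb).2]
      _ = ∑ j ∈ F.image g, u ^ j := (sum_image hg).symm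
      _ ≤ 2 * u := sum_pow_le_two_mul hu₀ hu fun h => by
          obtain ⟨b, hb, hb0⟩ := mem_image.1 h
          exact (hF b hb).1 hb0
  rw [← sum_filter_add_sum_filter_not _ (fun b => a < b), show 4 * u = 2 * u + 2 * u by ring]
  refine add_le_add (side _ (fun b => b - a) ?_ ?_) (side _ (fun b => a - b) ?_ ?_) <;>
    simp only [Set.InjOn, coe_filter, mem_filter, mem_erase, Set.mem_ofPred_eq] <;> omega

lemma sum_offDiag_mul_pow_natAbs_sub_le (hu₀ : 0 ≤ u) (hu : u ≤ 1 / 2) (T : Finset ℕ)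
    {φ ψ : ℕ → ℝ} (hφ : ∀ a, 0 ≤ φ a) (hψ : ∀ b, 0 ≤ ψ b) :
    ∑ ab ∈ T.offDiag, (φ ab.1 + ψ ab.2) * u ^ ((ab.1 : ℤ) - ab.2).natAbs
      ≤ 4 * u * (∑ a ∈ T, φ a + ∑ b ∈ T, ψ b) := by
  classical
  have hrow : ∀ χ : ℕ → ℝ, (∀ a, 0 ≤ χ a) →
      ∑ ab ∈ T.offDiag, χ ab.1 * u ^ ((ab.1 : ℤ) - ab.2).natAbs ≤ 4 * u * ∑ a ∈ T, χ a := by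
    intro χ hχ
    rw [sum_finset_product _ T (fun a => T.erase a) fun ab => by
      simp only [mem_offDiag, mem_erase]; tauto, mul_sum]
    refine sum_le_sum fun a _ => ?_
    dsimp only
    rw [← mul_sum, mul_comm (4 * u)]
    exact mul_le_mul_of_nonneg_left (sum_erase_pow_natAbs_sub_le hu₀ hu T a) (hχ a)
  have hswap : ∑ ab ∈ T.offDiag, ψ ab.2 * u ^ ((ab.1 : ℤ) - ab.2).natAbs
      = ∑ ab ∈ T.offDiag, ψ ab.1 * u ^ ((ab.1 : ℤ) - ab.2).natAbs := by
    refine sum_equiv (Equiv.prodComm ℕ ℕ) (fun ab => ?_) fun ab _ => ?_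
    · simp only [mem_offDiag, Equiv.prodComm_apply, Prod.fst_swap, Prod.snd_swap]
      tauto
    · simp only [Equiv.prodComm_apply, Prod.fst_swap, Prod.snd_swap]
      congr 2
      omega
  simp only [add_mul, sum_add_distrib, hswap, mul_add]
  exact add_le_add (hrow φ hφ) (hrow ψ hψ)

-- Off the diagonal at most one of `a`, `b` is the dominant valuation `k`, the only one whose
-- mass is not bounded by `c`.
lemma rpow_mul_le_of_ne {θ c : ℝ} {x y : ℕ → ℝ} {a b k : ℕ} (hab : a ≠ b) (hθ : 1 / 2 ≤ θ)
    (hx₀ : 0 ≤ x a) (hx₁ : x a ≤ 1) (hy₀ : 0 ≤ y b) (hy₁ : y b ≤ 1)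
    (hxc : a ≠ k → x a ≤ c) (hyc : b ≠ k → y b ≤ c) :
    (x a * y b) ^ θ ≤ (if a = k then c ^ θ else x a / 2) + (if b = k then c ^ θ else y b / 2) := by
  have hxy := mul_nonneg hx₀ hy₀
  by_cases hak : a = k
  · have hbk : b ≠ k := hak ▸ hab.symm
    rw [if_pos hak, if_neg hbk]
    have := Real.rpow_le_rpow hxy ((mul_le_of_le_one_left hy₀ hx₁).trans (hyc hbk))
      (by linarith : 0 ≤ θ)
    linarith
  by_cases hbk : b = k
  · rw [if_neg hak, if_pos hbk]
    have := Real.rpow_le_rpow hxy ((mul_le_of_le_one_right hx₀ hy₁).trans (hxc hak))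
      (by linarith : 0 ≤ θ)
    linarith
  rw [if_neg hak, if_neg hbk]
  calc (x a * y b) ^ θ ≤ (x a * y b) ^ (1 / 2 : ℝ) :=
        Real.rpow_le_rpow_of_exponent_ge' hxy (mul_le_one₀ hx₁ hy₀ hy₁) (by norm_num) hθ
    _ = x a ^ (1 / 2 : ℝ) * y b ^ (1 / 2 : ℝ) := Real.mul_rpow hx₀ hy₀
    _ ≤ 1 / 2 * x a + 1 / 2 * y b :=
        Real.geom_mean_le_arith_mean2_weighted (by norm_num) (by norm_num) hx₀ hy₀ (by norm_num)
    _ = x a / 2 + y b / 2 := by ring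

lemma sum_ite_eq_le_add_sum_erase {A : ℝ} (hA : 0 ≤ A) {z : ℕ → ℝ} (hz : ∀ a, 0 ≤ z a)
    (T : Finset ℕ) (k : ℕ) :
    ∑ a ∈ T, (if a = k then A else z a) ≤ A + ∑ a ∈ T.erase k, z a := by
  classical
  calc ∑ a ∈ T, (if a = k then A else z a) ≤ ∑ a ∈ insert k T, (if a = k then A else z a) :=
        sum_le_sum_of_subset_of_nonneg (subset_insert k T) fun a _ _ => by
          split_ifs <;> simp only [hA, hz]
    _ = A + ∑ a ∈ T.erase k, z a := by
        rw [← add_sum_erase _ _ (mem_insert_self k T), erase_insert_eq_erase, if_pos rfl]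
        exact congrArg (A + ·) (sum_congr rfl fun a ha => if_neg (ne_of_mem_erase ha))

lemma sum_offDiag_rpow_mul_pow_natAbs_sub_le {θ c : ℝ} {T : Finset ℕ} {k : ℕ} {x y : ℕ → ℝ}
    (hθ : 1 / 2 ≤ θ) (hθ₁ : θ ≤ 1) (hu₀ : 0 ≤ u) (hu : u ≤ 1 / 2) (hc₀ : 0 ≤ c) (hc₁ : c ≤ 1)
    (hx₀ : ∀ a, 0 ≤ x a) (hx₁ : ∀ a, x a ≤ 1) (hy₀ : ∀ b, 0 ≤ y b) (hy₁ : ∀ b, y b ≤ 1)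
    (hx : ∑ a ∈ T.erase k, x a ≤ c) (hy : ∑ b ∈ T.erase k, y b ≤ c) :
    ∑ ab ∈ T.offDiag, (x ab.1 * y ab.2) ^ θ * u ^ ((ab.1 : ℤ) - ab.2).natAbs
      ≤ 12 * c ^ θ * u := by
  have hcθ : 0 ≤ c ^ θ := Real.rpow_nonneg hc₀ θ
  have hc_le : c ≤ c ^ θ := by
    simpa using Real.rpow_le_rpow_of_exponent_ge' hc₀ hc₁ (by linarith) hθ₁
  have hle : ∀ z : ℕ → ℝ, (∀ a, 0 ≤ z a) → ∑ a ∈ T.erase k, z a ≤ c →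
      ∑ a ∈ T, (if a = k then c ^ θ else z a / 2) ≤ 3 / 2 * c ^ θ := fun z hz₀ hz => by
    have := sum_ite_eq_le_add_sum_erase hcθ (fun a => div_nonneg (hz₀ a) zero_le_two) T k
    rw [← sum_div] at this
    linarith
  set φ : ℕ → ℝ := fun a => if a = k then c ^ θ else x a / 2
  set ψ : ℕ → ℝ := fun b => if b = k then c ^ θ else y b / 2
  have hterm : ∀ ab ∈ T.offDiag, (x ab.1 * y ab.2) ^ θ ≤ φ ab.1 + ψ ab.2 := by
    rintro ⟨a, b⟩ hab
    obtain ⟨ha, hb, hne⟩ := mem_offDiag.1 hab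
    exact rpow_mul_le_of_ne hne hθ (hx₀ a) (hx₁ a) (hy₀ b) (hy₁ b)
      (fun hak => (single_le_sum (fun i _ => hx₀ i) (mem_erase.2 ⟨hak, ha⟩)).trans hx)
      (fun hbk => (single_le_sum (fun i _ => hy₀ i) (mem_erase.2 ⟨hbk, hb⟩)).trans hy)
  have hφ : ∀ a, 0 ≤ φ a := fun a => by dsimp only [φ]; split_ifs <;> linarith [hx₀ a]
  have hψ : ∀ b, 0 ≤ ψ b := fun b => by dsimp only [ψ]; split_ifs <;> linarith [hy₀ b]
  calc ∑ ab ∈ T.offDiag, (x ab.1 * y ab.2) ^ θ * u ^ ((ab.1 : ℤ) - ab.2).natAbs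
      ≤ ∑ ab ∈ T.offDiag, (φ ab.1 + ψ ab.2) * u ^ ((ab.1 : ℤ) - ab.2).natAbs :=
        sum_le_sum fun ab hab => mul_le_mul_of_nonneg_right (hterm ab hab) (pow_nonneg hu₀ _)
    _ ≤ 4 * u * (∑ a ∈ T, φ a + ∑ b ∈ T, ψ b) := sum_offDiag_mul_pow_natAbs_sub_le hu₀ hu T hφ hψ
    _ ≤ 4 * u * (3 / 2 * c ^ θ + 3 / 2 * c ^ θ) :=
        mul_le_mul_of_nonneg_left (add_le_add (hle x hx₀ hx) (hle y hy₀ hy)) (by linarith)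
    _ = 12 * c ^ θ * u := by ring

end

lemma le_mul_rpow_of_div_rpow_mul_le {m D D₀ e K L r : ℝ} (hr : 1 ≤ r) (hm : 0 ≤ m)
    (hmD : m ≤ D) (hD₀ : 0 < D₀) (he : 0 ≤ e) (hK : 0 < K) (hL : 0 ≤ L)
    (h : (m / D) ^ r * D * K ≤ L * ((e / D₀) ^ r * D₀)) :
    m ≤ (L / K) ^ r⁻¹ * e * (D / D₀) ^ (1 - r⁻¹) := by
  rcases (hm.trans hmD).eq_or_lt with hD | hD
  · have : m = 0 := le_antisymm (hD ▸ hmD) hm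
    rw [this]
    positivity
  -- with `δ = m / D`, `δ₀ = e / D₀`, `q = D / D₀` the hypothesis reads `δ ^ r q K ≤ L δ₀ ^ r`
  set δ := m / D
  set δ₀ := e / D₀
  set q := D / D₀
  have hq : 0 < q := div_pos hD hD₀
  have hr₀ : r ≠ 0 := by positivity
  have hδ : 0 ≤ δ := div_nonneg hm hD.le
  have hδ₀ : 0 ≤ δ₀ := div_nonneg he hD₀.le
  have key : δ ^ r * q ≤ L / K * δ₀ ^ r := by
    rw [div_mul_eq_mul_div, le_div_iff₀ hK, ← mul_le_mul_iff_of_pos_right hD₀]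
    calc δ ^ r * q * K * D₀ = δ ^ r * D * K := by
          simp only [q]; field_simp
      _ ≤ L * (δ₀ ^ r * D₀) := h
      _ = L * δ₀ ^ r * D₀ := by ring
  have key' : δ * q ^ r⁻¹ ≤ (L / K) ^ r⁻¹ * δ₀ := by
    have := Real.rpow_le_rpow (by positivity) key (inv_nonneg.2 (by linarith : (0 : ℝ) ≤ r))
    rwa [Real.mul_rpow (by positivity) hq.le, Real.mul_rpow (by positivity) (by positivity),
      Real.rpow_rpow_inv hδ hr₀, Real.rpow_rpow_inv hδ₀ hr₀] at this
  calc m = δ * q ^ r⁻¹ * (q ^ (1 - r⁻¹) * D₀) := by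
        rw [mul_assoc δ, ← mul_assoc (q ^ r⁻¹), ← Real.rpow_add hq, add_sub_cancel,
          Real.rpow_one]
        simp only [δ, q]
        field_simp
    _ ≤ (L / K) ^ r⁻¹ * δ₀ * (q ^ (1 - r⁻¹) * D₀) :=
        mul_le_mul_of_nonneg_right key' (by positivity)
    _ = (L / K) ^ r⁻¹ * e * q ^ (1 - r⁻¹) := by
        simp only [δ₀]
        field_simp

lemma rpow_neg_inv_le_half {τ p : ℝ} (hτ₀ : 0 ≤ τ) (hτ₁ : τ ≤ 1) (hp : 8 ≤ p) :
    p ^ (-(2 + τ)⁻¹) ≤ 1 / 2 := by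
  have h8 : (2 : ℝ) ^ (2 + τ) ≤ p :=
    calc (2 : ℝ) ^ (2 + τ) ≤ 2 ^ (3 : ℝ) :=
          Real.rpow_le_rpow_of_exponent_le (by norm_num) (by linarith)
      _ = 8 := by norm_num
      _ ≤ p := hp
  have h2 : (2 : ℝ) ≤ p ^ (2 + τ)⁻¹ :=
    calc (2 : ℝ) = ((2 : ℝ) ^ (2 + τ)) ^ (2 + τ)⁻¹ :=
          (Real.rpow_rpow_inv (by norm_num) (by linarith)).symm
      _ ≤ p ^ (2 + τ)⁻¹ := Real.rpow_le_rpow (by positivity) h8 (by positivity)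
  rw [Real.rpow_neg (by linarith), one_div]
  exact inv_anti₀ (by norm_num) h2

lemma div_rpow_one_sub_mul_rpow_neg_le {C p κ : ℝ} (hC : 1 ≤ C) (hp : 0 < p) (hκ : 0 ≤ κ) :
    (C / p) ^ (1 - κ) * p ^ (-κ) ≤ C / p := by
  have hCκ : C ^ (1 - κ) ≤ C := by
    simpa using Real.rpow_le_rpow_of_exponent_le hC (by linarith : 1 - κ ≤ 1)
  calc (C / p) ^ (1 - κ) * p ^ (-κ) = C ^ (1 - κ) / p := by
        rw [Real.div_rpow (by linarith) hp.le, Real.rpow_sub hp, Real.rpow_one,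
          Real.rpow_neg hp.le]
        field_simp
    _ ≤ C / p := by gcongr

lemma sum_inv_sq_le_two_div {t : ℝ} (ht : 0 < t) {Q : Finset ℕ} (hQ : ∀ n ∈ Q, t < n) :
    ∑ n ∈ Q, ((n : ℝ) ^ 2)⁻¹ ≤ 2 / t := by
  have hsub : Q ⊆ Ioo ⌊t⌋₊ (Q.sup id + 1) := fun n hn => by
    have := le_sup (f := id) hn
    have := (Nat.floor_lt ht.le).2 (hQ n hn)
    simp only [mem_Ioo, id] at *
    omega
  calc ∑ n ∈ Q, ((n : ℝ) ^ 2)⁻¹ ≤ ∑ n ∈ Ioo ⌊t⌋₊ (Q.sup id + 1), ((n : ℝ) ^ 2)⁻¹ :=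
        sum_le_sum_of_subset_of_nonneg hsub fun n _ _ => by positivity
    _ ≤ 2 / (⌊t⌋₊ + 1) := sum_Ioo_inv_sq_le _ _
    _ ≤ 2 / t := div_le_div_of_nonneg_left (by norm_num) ht (Nat.lt_floor_add_one t).le

open scoped Classical in
lemma one_div_two_mul_le_sum_of_LfunRes_lt {s t : ℝ} {S : Set ℕ} {v w : ℕ}
    (hL : 1 / s ≤ Lfun t v w) (hres : LfunRes t S v w < 1 / (2 * s)) :
    1 / (2 * s) ≤ ∑ p ∈ (v * w / Nat.gcd v w ^ 2).primeFactors.filter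
      (fun p : ℕ => t < (p : ℝ) ∧ p ∈ S), (1 : ℝ) / p := by
  rw [Lfun, ← sum_filter_add_sum_filter_not _ (fun p => p ∈ S), filter_filter,
    filter_filter] at hL
  rw [LfunRes] at hres
  have : 1 / s = 1 / (2 * s) + 1 / (2 * s) := by ring
  linarith

namespace GCDGraph

section

variable {mu : ℕ → ℝ}

lemma muSet_nonneg (hmu : ∀ n, 0 ≤ mu n) (S : Finset ℕ) : 0 ≤ muSet mu S :=
  sum_nonneg fun n _ => hmu n

lemma muEdges_nonneg (hmu : ∀ n, 0 ≤ mu n) (E : Finset (ℕ × ℕ)) : 0 ≤ muEdges mu E :=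
  sum_nonneg fun e _ => mul_nonneg (hmu e.1) (hmu e.2)

lemma muSet_mono (hmu : ∀ n, 0 ≤ mu n) {S T : Finset ℕ} (h : S ⊆ T) :
    muSet mu S ≤ muSet mu T :=
  sum_le_sum_of_subset_of_nonneg h fun n _ _ => hmu n

lemma muEdges_mono (hmu : ∀ n, 0 ≤ mu n) {E F : Finset (ℕ × ℕ)} (h : E ⊆ F) :
    muEdges mu E ≤ muEdges mu F :=
  sum_le_sum_of_subset_of_nonneg h fun e _ _ => mul_nonneg (hmu e.1) (hmu e.2)

lemma muEdges_le_muSet_mul (hmu : ∀ n, 0 ≤ mu n) {E : Finset (ℕ × ℕ)} {A B : Finset ℕ}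
    (h : E ⊆ A ×ˢ B) : muEdges mu E ≤ muSet mu A * muSet mu B := by
  calc muEdges mu E ≤ muEdges mu (A ×ˢ B) := muEdges_mono hmu h
    _ = muSet mu A * muSet mu B := by
      rw [muEdges, muSet, muSet, sum_product, sum_mul_sum]

lemma densityRaw_nonneg (hmu : ∀ n, 0 ≤ mu n) (V W : Finset ℕ) (E : Finset (ℕ × ℕ)) :
    0 ≤ densityRaw mu V W E :=
  div_nonneg (muEdges_nonneg hmu E) (mul_nonneg (muSet_nonneg hmu V) (muSet_nonneg hmu W))

lemma mul_muEdges_le_sum (hmu : ∀ n, 0 ≤ mu n) {B : Finset (ℕ × ℕ)}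
    (F : ℕ × ℕ → Finset ℕ) (g : ℕ → ℝ) {η : ℝ} (hB : ∀ e ∈ B, η ≤ ∑ p ∈ F e, g p) :
    η * muEdges mu B ≤ ∑ p ∈ B.biUnion F, g p * muEdges mu (B.filter fun e => p ∈ F e) := by
  classical
  calc η * muEdges mu B = ∑ e ∈ B, η * (mu e.1 * mu e.2) := mul_sum _ _ _
    _ ≤ ∑ e ∈ B, ∑ p ∈ F e, g p * (mu e.1 * mu e.2) := sum_le_sum fun e he => by
        rw [← sum_mul]
        exact mul_le_mul_of_nonneg_right (hB e he) (mul_nonneg (hmu _) (hmu _))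
    _ = ∑ p ∈ B.biUnion F, ∑ e ∈ B.filter fun e => p ∈ F e, g p * (mu e.1 * mu e.2) :=
        sum_comm' fun e p => by simp only [mem_biUnion, mem_filter]; tauto
    _ = _ := sum_congr rfl fun p _ => (mul_sum _ _ _).symm

lemma exactPart_eq_filter_factorization {S : Finset ℕ} (hS : ∀ v ∈ S, 0 < v) {p : ℕ}
    (hp : p.Prime) (k : ℕ) :
    exactPart S p k = S.filter fun v => v.factorization p = k := by
  refine filter_congr fun v hv => ?_
  have hv0 := (hS v hv).ne'
  rw [hp.pow_dvd_iff_le_factorization hv0, hp.pow_dvd_iff_le_factorization hv0]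
  omega

lemma muSet_exactPart_add_sum_erase_le (hmu : ∀ n, 0 ≤ mu n) {S : Finset ℕ}
    (hS : ∀ v ∈ S, 0 < v) {p : ℕ} (hp : p.Prime) (T : Finset ℕ) (k : ℕ) :
    muSet mu (exactPart S p k) + ∑ a ∈ T.erase k, muSet mu (exactPart S p a) ≤ muSet mu S := by
  classical
  have hfib := sum_fiberwise_eq_sum_filter S (insert k T) (fun v => v.factorization p) mu
  rw [← erase_insert_eq_erase,
    add_sum_erase (insert k T) (fun a => muSet mu (exactPart S p a)) (mem_insert_self k T)]
  simp only [exactPart_eq_filter_factorization hS hp, muSet]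
  rw [hfib]
  exact sum_le_sum_of_subset_of_nonneg (filter_subset _ _) fun n _ _ => hmu n

lemma sum_erase_muSet_exactPart_div_le (hmu : ∀ n, 0 ≤ mu n) {S : Finset ℕ}
    (hS : ∀ v ∈ S, 0 < v) (hS₀ : 0 < muSet mu S) {p : ℕ} (hp : p.Prime) (T : Finset ℕ)
    {k : ℕ} {c : ℝ} (hk : 1 - c ≤ muSet mu (exactPart S p k) / muSet mu S) :
    ∑ a ∈ T.erase k, muSet mu (exactPart S p a) / muSet mu S ≤ c := by
  have := muSet_exactPart_add_sum_erase_le hmu hS hp T k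
  rw [le_div_iff₀ hS₀] at hk
  rw [← sum_div, div_le_iff₀ hS₀]
  linarith

end

lemma prime_dvd_div_gcd_sq_iff {p v w : ℕ} (hp : p.Prime) (hv : v ≠ 0) (hw : w ≠ 0) :
    p ∣ v * w / Nat.gcd v w ^ 2 ↔ v.factorization p ≠ w.factorization p := by
  have hdvd : Nat.gcd v w ^ 2 ∣ v * w := by
    rw [sq]; exact mul_dvd_mul (Nat.gcd_dvd_left v w) (Nat.gcd_dvd_right v w)
  have hN : v * w / Nat.gcd v w ^ 2 ≠ 0 := by
    rw [Nat.div_ne_zero_iff_of_dvd hdvd]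
    exact ⟨mul_ne_zero hv hw, pow_ne_zero 2 (Nat.gcd_ne_zero_left hv)⟩
  rw [hp.dvd_iff_one_le_factorization hN, Nat.factorization_div hdvd, Finsupp.tsub_apply,
    Nat.factorization_mul hv hw, Nat.factorization_pow, Nat.factorization_gcd hv hw,
    Finsupp.add_apply, Finsupp.smul_apply, Finsupp.inf_apply, smul_eq_mul]
  omega

lemma muEdges_filter_dvd_le_sum_offDiag (G : GCDGraph) {p : ℕ} (hp : p.Prime) {T : Finset ℕ}
    (hT : ∀ v ∈ G.V ∪ G.W, v.factorization p ∈ T) :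
    muEdges G.mu (G.E.filter fun e => p ∣ e.1 * e.2 / Nat.gcd e.1 e.2 ^ 2)
      ≤ ∑ ab ∈ T.offDiag, muEdges G.mu (edgesAt G p ab.1 ab.2) := by
  classical
  set val : ℕ × ℕ → ℕ × ℕ := fun e => (e.1.factorization p, e.2.factorization p)
  have hpos : ∀ e ∈ G.E, 0 < e.1 ∧ 0 < e.2 := fun e he =>
    have h := mem_product.1 (G.E_sub he)
    ⟨G.V_pos _ h.1, G.W_pos _ h.2⟩
  have hmaps : ∀ e ∈ G.E.filter (fun e => p ∣ e.1 * e.2 / Nat.gcd e.1 e.2 ^ 2),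
      val e ∈ T.offDiag := by
    intro e he
    obtain ⟨heE, hdvd⟩ := mem_filter.1 he
    have h := mem_product.1 (G.E_sub heE)
    exact mem_offDiag.2 ⟨hT _ (mem_union_left _ h.1), hT _ (mem_union_right _ h.2),
      (prime_dvd_div_gcd_sq_iff hp (hpos e heE).1.ne' (hpos e heE).2.ne').1 hdvd⟩
  rw [muEdges, ← sum_fiberwise_of_maps_to hmaps]
  refine sum_le_sum fun ab _ => muEdges_mono G.mu_nonneg fun e he => ?_
  simp only [mem_filter] at he
  obtain ⟨⟨heE, -⟩, hval⟩ := he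
  have h := mem_product.1 (G.E_sub heE)
  simp only [edgesAt, exactPart_eq_filter_factorization G.V_pos hp,
    exactPart_eq_filter_factorization G.W_pos hp, mem_filter, ← hval]
  exact ⟨heE, ⟨h.1, rfl⟩, h.2, rfl⟩

noncomputable def localFactor (τ : ℝ) (f g : ℕ → ℕ) (p : ℕ) : ℝ :=
  (p : ℝ) ^ (((f p : ℤ) - (g p : ℤ)).natAbs) *
    ((1 - (if f p = g p ∧ 1 ≤ f p then ((p : ℝ))⁻¹ else 0))⁻¹) ^ 2 *
    ((1 - (p : ℝ) ^ (-1 - τ / 4))⁻¹) ^ 3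

lemma qualityRaw_eq (τ : ℝ) (mu : ℕ → ℝ) (V W : Finset ℕ) (E : Finset (ℕ × ℕ))
    (P : Finset ℕ) (f g : ℕ → ℕ) :
    qualityRaw τ mu V W E P f g
      = densityRaw mu V W E ^ (2 + τ) * muSet mu V * muSet mu W * ∏ p ∈ P, localFactor τ f g p :=
  rfl

lemma pow_natAbs_le_localFactor {τ : ℝ} (hτ : 0 ≤ τ) (f g : ℕ → ℕ) {p : ℕ} (hp : p.Prime) :
    (p : ℝ) ^ (((f p : ℤ) - (g p : ℤ)).natAbs) ≤ localFactor τ f g p := by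
  have hp₁ : (1 : ℝ) < p := by exact_mod_cast hp.one_lt
  have hA : 1 ≤ (1 - (if f p = g p ∧ 1 ≤ f p then ((p : ℝ))⁻¹ else 0))⁻¹ := by
    split_ifs
    · rw [one_le_inv₀ (by simpa using inv_lt_one_of_one_lt₀ hp₁)]
      simp
    · simp
  have hB : 1 ≤ (1 - (p : ℝ) ^ (-1 - τ / 4))⁻¹ := by
    have := Real.rpow_lt_one_of_one_lt_of_neg hp₁ (by linarith : -1 - τ / 4 < 0)
    rw [one_le_inv₀ (by linarith)]
    linarith [Real.rpow_nonneg (by linarith : (0 : ℝ) ≤ p) (-1 - τ / 4)]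
  unfold localFactor
  have hpow : (0 : ℝ) ≤ (p : ℝ) ^ (((f p : ℤ) - (g p : ℤ)).natAbs) := by positivity
  calc (p : ℝ) ^ (((f p : ℤ) - (g p : ℤ)).natAbs)
      = (p : ℝ) ^ (((f p : ℤ) - (g p : ℤ)).natAbs) * 1 ^ 2 * 1 ^ 3 := by ring
    _ ≤ _ := by gcongr

lemma localFactor_pos {τ : ℝ} (hτ : 0 ≤ τ) (f g : ℕ → ℕ) {p : ℕ} (hp : p.Prime) :
    0 < localFactor τ f g p :=
  (pow_pos (by exact_mod_cast hp.pos) _).trans_le (pow_natAbs_le_localFactor hτ f g hp)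

lemma prod_localFactor_pos {τ : ℝ} (hτ : 0 ≤ τ) (G : GCDGraph) :
    0 < ∏ p ∈ G.P, localFactor τ G.f G.g p :=
  prod_pos fun p hp => localFactor_pos hτ G.f G.g (G.P_prime p hp)

lemma qualityAt_eq {τ : ℝ} (G : GCDGraph) {p : ℕ} (hpP : p ∉ G.P) (a b : ℕ) :
    qualityAt τ G p a b
      = densityRaw G.mu (exactPart G.V p a) (exactPart G.W p b) (edgesAt G p a b) ^ (2 + τ)
        * muSet G.mu (exactPart G.V p a) * muSet G.mu (exactPart G.W p b)
        * (localFactor τ (Function.update G.f p a) (Function.update G.g p b) p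
          * ∏ q ∈ G.P, localFactor τ G.f G.g q) := by
  rw [qualityAt, qualityRaw_eq, prod_insert hpP]
  congr 2
  refine prod_congr rfl fun q hq => ?_
  have hqp : q ≠ p := ne_of_mem_of_not_mem hq hpP
  simp only [localFactor, Function.update_of_ne hqp]

lemma densityRaw_rpow_mul_le_of_qualityAt_le {τ M : ℝ} (hτ : 0 ≤ τ) (G : GCDGraph) {p : ℕ}
    (hp : p.Prime) (hpP : p ∉ G.P) {a b : ℕ} (hq : qualityAt τ G p a b ≤ M * quality τ G) :
    densityRaw G.mu (exactPart G.V p a) (exactPart G.W p b) (edgesAt G p a b) ^ (2 + τ)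
        * (muSet G.mu (exactPart G.V p a) * muSet G.mu (exactPart G.W p b))
        * (p : ℝ) ^ ((a : ℤ) - b).natAbs
      ≤ M * (G.density ^ (2 + τ) * (muSet G.mu G.V * muSet G.mu G.W)) := by
  have hmu := G.mu_nonneg
  have hΦ := pow_natAbs_le_localFactor hτ (Function.update G.f p a) (Function.update G.g p b) hp
  simp only [Function.update_self] at hΦ
  rw [qualityAt_eq G hpP, quality, qualityRaw_eq] at hq
  set d := densityRaw G.mu (exactPart G.V p a) (exactPart G.W p b) (edgesAt G p a b)
  set Va := muSet G.mu (exactPart G.V p a)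
  set Wb := muSet G.mu (exactPart G.W p b)
  set Φ := localFactor τ (Function.update G.f p a) (Function.update G.g p b) p
  set prodP := ∏ q ∈ G.P, localFactor τ G.f G.g q
  have hprodP : 0 < prodP := prod_localFactor_pos hτ G
  have hdVW : 0 ≤ d ^ (2 + τ) * (Va * Wb) :=
    mul_nonneg (Real.rpow_nonneg (densityRaw_nonneg hmu _ _ _) _)
      (mul_nonneg (muSet_nonneg hmu _) (muSet_nonneg hmu _))
  refine le_of_mul_le_mul_right ?_ hprodP
  calc d ^ (2 + τ) * (Va * Wb) * (p : ℝ) ^ ((a : ℤ) - b).natAbs * prodP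
      ≤ d ^ (2 + τ) * (Va * Wb) * Φ * prodP := by gcongr
    _ = d ^ (2 + τ) * Va * Wb * (Φ * prodP) := by ring
    _ ≤ _ := hq
    _ = _ := by rw [density]; ring

lemma muEdges_edgesAt_le {τ M : ℝ} (hτ : 0 ≤ τ) (hM : 0 ≤ M) (G : GCDGraph) {p : ℕ}
    (hp : p.Prime) (hpP : p ∉ G.P) (hV : 0 < muSet G.mu G.V) (hW : 0 < muSet G.mu G.W)
    {a b : ℕ} (hq : qualityAt τ G p a b ≤ M * quality τ G) :
    muEdges G.mu (edgesAt G p a b)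
      ≤ M ^ (2 + τ)⁻¹ * muEdges G.mu G.E
        * ((muSet G.mu (exactPart G.V p a) / muSet G.mu G.V
            * (muSet G.mu (exactPart G.W p b) / muSet G.mu G.W)) ^ (1 - (2 + τ)⁻¹)
          * ((p : ℝ) ^ (-(2 + τ)⁻¹)) ^ ((a : ℤ) - b).natAbs) := by
  have hmu := G.mu_nonneg
  have hp₀ : (0 : ℝ) < p := by exact_mod_cast hp.pos
  refine (le_mul_rpow_of_div_rpow_mul_le (by linarith) (muEdges_nonneg hmu _)
    (muEdges_le_muSet_mul hmu fun e he => mem_product.2 (mem_filter.1 he).2) (mul_pos hV hW)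
    (muEdges_nonneg hmu _) (pow_pos hp₀ _) hM
    (densityRaw_rpow_mul_le_of_qualityAt_le hτ G hp hpP hq)).trans_eq ?_
  rw [Real.div_rpow hM (by positivity), ← Real.rpow_pow_comm hp₀.le, Real.rpow_neg hp₀.le,
    inv_pow, div_mul_div_comm]
  ring

lemma muEdges_filter_dvd_le {τ M C : ℝ} (hτ₀ : 0 ≤ τ) (hτ₁ : τ ≤ 1) (hM : 1 ≤ M) (hC : 1 ≤ C)
    (G : GCDGraph) {p : ℕ} (hp : p.Prime) (hpP : p ∉ G.P) (hp₈ : 8 ≤ (p : ℝ)) (hCp : C ≤ p)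
    (hV : 0 < muSet G.mu G.V) (hW : 0 < muSet G.mu G.W) {k : ℕ}
    (hkV : 1 - C / p ≤ muSet G.mu (exactPart G.V p k) / muSet G.mu G.V)
    (hkW : 1 - C / p ≤ muSet G.mu (exactPart G.W p k) / muSet G.mu G.W)
    (hq : ∀ a b : ℕ, a ≠ b → qualityAt τ G p a b < M * quality τ G) :
    muEdges G.mu (G.E.filter fun e => p ∣ e.1 * e.2 / Nat.gcd e.1 e.2 ^ 2)
      ≤ 12 * M * C / p * muEdges G.mu G.E := by
  have hmu := G.mu_nonneg
  have hp₀ : (0 : ℝ) < p := by linarith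
  set κ : ℝ := (2 + τ)⁻¹
  set u : ℝ := (p : ℝ) ^ (-κ)
  set c : ℝ := C / p
  set x : ℕ → ℝ := fun a => muSet G.mu (exactPart G.V p a) / muSet G.mu G.V
  set y : ℕ → ℝ := fun b => muSet G.mu (exactPart G.W p b) / muSet G.mu G.W
  set T : Finset ℕ := (G.V ∪ G.W).image fun v => v.factorization p
  have hκ₀ : 0 < κ := by positivity
  have hκ : κ ≤ 1 / 2 := by
    rw [one_div]; exact inv_anti₀ (by norm_num) (by linarith)
  have hu₀ : 0 ≤ u := by positivity
  have hc₀ : 0 ≤ c := by positivity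
  have hc₁ : c ≤ 1 := (div_le_one hp₀).2 hCp
  have hx₀ : ∀ a, 0 ≤ x a := fun a => div_nonneg (muSet_nonneg hmu _) hV.le
  have hy₀ : ∀ b, 0 ≤ y b := fun b => div_nonneg (muSet_nonneg hmu _) hW.le
  have hx₁ : ∀ a, x a ≤ 1 := fun a => div_le_one_of_le₀ (muSet_mono hmu (filter_subset _ _)) hV.le
  have hy₁ : ∀ b, y b ≤ 1 := fun b => div_le_one_of_le₀ (muSet_mono hmu (filter_subset _ _)) hW.le
  have hpair : ∀ ab ∈ T.offDiag, muEdges G.mu (edgesAt G p ab.1 ab.2)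
      ≤ M ^ κ * muEdges G.mu G.E * ((x ab.1 * y ab.2) ^ (1 - κ) * u ^ ((ab.1 : ℤ) - ab.2).natAbs) :=
    fun ab hab => muEdges_edgesAt_le hτ₀ (by linarith) G hp hpP hV hW
      (hq ab.1 ab.2 (mem_offDiag.1 hab).2.2).le
  calc muEdges G.mu (G.E.filter fun e => p ∣ e.1 * e.2 / Nat.gcd e.1 e.2 ^ 2)
      ≤ ∑ ab ∈ T.offDiag, muEdges G.mu (edgesAt G p ab.1 ab.2) :=
        muEdges_filter_dvd_le_sum_offDiag G hp fun v hv => mem_image_of_mem _ hv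
    _ ≤ ∑ ab ∈ T.offDiag, M ^ κ * muEdges G.mu G.E
          * ((x ab.1 * y ab.2) ^ (1 - κ) * u ^ ((ab.1 : ℤ) - ab.2).natAbs) := sum_le_sum hpair
    _ ≤ M ^ κ * muEdges G.mu G.E * (12 * c ^ (1 - κ) * u) := by
        rw [← mul_sum]
        refine mul_le_mul_of_nonneg_left ?_
          (mul_nonneg (Real.rpow_nonneg (by linarith) _) (muEdges_nonneg hmu _))
        exact sum_offDiag_rpow_mul_pow_natAbs_sub_le (by linarith) (by linarith) hu₀
          (rpow_neg_inv_le_half hτ₀ hτ₁ hp₈) hc₀ hc₁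
          hx₀ hx₁ hy₀ hy₁ (sum_erase_muSet_exactPart_div_le hmu G.V_pos hV hp T hkV)
          (sum_erase_muSet_exactPart_div_le hmu G.W_pos hW hp T hkW)
    _ ≤ M * muEdges G.mu G.E * (12 * (C / p)) := by
        have hMκ : M ^ κ ≤ M := by
          simpa using Real.rpow_le_rpow_of_exponent_le hM (by linarith : κ ≤ 1)
        have hE := muEdges_nonneg hmu G.E
        have hcθ : 0 ≤ c ^ (1 - κ) := Real.rpow_nonneg hc₀ _
        have hcu := div_rpow_one_sub_mul_rpow_neg_le hC hp₀ hκ₀.le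
        exact mul_le_mul (mul_le_mul_of_nonneg_right hMκ hE) (by linarith) (by positivity)
          (by positivity)
    _ = 12 * M * C / p * muEdges G.mu G.E := by ring

lemma one_le_C2 {τ M : ℝ} (hτ₀ : 0 < τ) (hτ₁ : τ ≤ 10 ^ 4) (hM : 1 ≤ M) : 1 ≤ C2 τ M := by
  have hC1 : 1 ≤ C1 τ := (one_le_div hτ₀).2 hτ₁
  have : 1 ≤ C1 τ ^ 3 := one_le_pow₀ hC1
  rw [C2]
  nlinarith

lemma muEdges_filter_dvd_le_of_mem_Rsharp {τ M : ℝ} (hτ₀ : 0 < τ) (hτ₁ : τ ≤ 1) (hM : 1 ≤ M)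
    (G : GCDGraph) (hV : 0 < muSet G.mu G.V) (hW : 0 < muSet G.mu G.W) {p : ℕ}
    (hp : p ∈ Rsharp τ M G) (hpC : 8 * C2 τ M ≤ p) :
    muEdges G.mu (G.E.filter fun e => p ∣ e.1 * e.2 / Nat.gcd e.1 e.2 ^ 2)
      ≤ 12 * M * C2 τ M / p * muEdges G.mu G.E := by
  obtain ⟨⟨hpp, hpP, -⟩, ⟨k, hkV, hkW⟩, hq⟩ := hp
  have hC := one_le_C2 hτ₀ (by linarith) hM
  exact muEdges_filter_dvd_le hτ₀.le hτ₁ hM hC G hpp hpP (by linarith) (by linarith) hV hW hkV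
    hkW hq

lemma muEdges_filter_LfunRes_lt_le {τ M : ℝ} (hτ₀ : 0 < τ) (hτ₁ : τ ≤ 1) (hM : 1 ≤ M)
    (G : GCDGraph) (hV : 0 < muSet G.mu G.V) (hW : 0 < muSet G.mu G.W)
    (hsharp : R G ⊆ Rsharp τ M G) {s t : ℝ} (hs : 1 ≤ s) (ht : 10 ^ 4 * M * C2 τ M * s ≤ t)
    (hE : ∀ e ∈ G.E, 1 / s ≤ Lfun t e.1 e.2) :
    muEdges G.mu (G.E.filter fun e => LfunRes t (R G) e.1 e.2 < 1 / (2 * s))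
      ≤ muEdges G.mu G.E / 100 := by
  classical
  have hmu := G.mu_nonneg
  have hC := one_le_C2 hτ₀ (by linarith) hM
  have hCt : 10 ^ 4 * C2 τ M ≤ t := by nlinarith [one_le_mul_of_one_le_of_one_le hM hs]
  have hE₀ := muEdges_nonneg hmu G.E
  set B := G.E.filter fun e => LfunRes t (R G) e.1 e.2 < 1 / (2 * s)
  set F : ℕ × ℕ → Finset ℕ := fun e => (e.1 * e.2 / Nat.gcd e.1 e.2 ^ 2).primeFactors.filter
    fun p : ℕ => t < (p : ℝ) ∧ p ∈ R G
  have hB : ∀ e ∈ B, 1 / (2 * s) ≤ ∑ p ∈ F e, (1 : ℝ) / p := fun e he =>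
    one_div_two_mul_le_sum_of_LfunRes_lt (hE e (mem_filter.1 he).1) (mem_filter.1 he).2
  have hprime : ∀ p ∈ B.biUnion F, (1 : ℝ) / p * muEdges G.mu (B.filter fun e => p ∈ F e)
      ≤ 12 * M * C2 τ M * muEdges G.mu G.E * ((p : ℝ) ^ 2)⁻¹ := fun p hp => by
    obtain ⟨e, -, hpe⟩ := mem_biUnion.1 hp
    obtain ⟨hpe, hpt, hpR⟩ := mem_filter.1 hpe
    have hsub : B.filter (fun e => p ∈ F e)
        ⊆ G.E.filter fun e => p ∣ e.1 * e.2 / Nat.gcd e.1 e.2 ^ 2 := fun e he => by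
      simp only [mem_filter, F, B] at he ⊢
      exact ⟨he.1.1, Nat.dvd_of_mem_primeFactors he.2.1⟩
    have := (muEdges_mono hmu hsub).trans (muEdges_filter_dvd_le_of_mem_Rsharp hτ₀ hτ₁ hM G hV hW
      (hsharp hpR) (by linarith))
    calc (1 : ℝ) / p * muEdges G.mu (B.filter fun e => p ∈ F e)
        ≤ 1 / p * (12 * M * C2 τ M / p * muEdges G.mu G.E) := by gcongr
      _ = 12 * M * C2 τ M * muEdges G.mu G.E * ((p : ℝ) ^ 2)⁻¹ := by field_simp
  have hQ : ∀ p ∈ B.biUnion F, t < p := fun p hp => by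
    obtain ⟨e, -, hpe⟩ := mem_biUnion.1 hp
    exact (mem_filter.1 hpe).2.1
  calc muEdges G.mu B = 2 * s * (1 / (2 * s) * muEdges G.mu B) := by field_simp
    _ ≤ 2 * s * ∑ p ∈ B.biUnion F, 12 * M * C2 τ M * muEdges G.mu G.E * ((p : ℝ) ^ 2)⁻¹ := by
        gcongr
        exact (mul_muEdges_le_sum hmu F _ hB).trans (sum_le_sum hprime)
    _ ≤ 2 * s * (12 * M * C2 τ M * muEdges G.mu G.E * (2 / t)) := by
        rw [← mul_sum]
        gcongr
        exact sum_inv_sq_le_two_div (by linarith) hQ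
    _ = 48 * (M * C2 τ M * s) / t * muEdges G.mu G.E := by ring
    _ ≤ 1 / 100 * muEdges G.mu G.E := by
        refine mul_le_mul_of_nonneg_right ?_ hE₀
        rw [div_le_iff₀ (by linarith)]
        linarith
    _ = muEdges G.mu G.E / 100 := by ring

def filterEdges (G : GCDGraph) (q : ℕ × ℕ → Prop) [DecidablePred q] : GCDGraph :=
  { G with
    E := G.E.filter q
    E_sub := (filter_subset q G.E).trans G.E_sub
    gcd_exact := fun p hp e he => G.gcd_exact p hp e (mem_filter.1 he).1 }

lemma filterEdges_isSubgraph (G : GCDGraph) (q : ℕ × ℕ → Prop) [DecidablePred q] :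
    IsSubgraph (G.filterEdges q) G :=
  ⟨rfl, subset_rfl, subset_rfl, filter_subset q G.E, subset_rfl, fun _ _ => rfl, fun _ _ => rfl⟩

lemma muSet_pos_of_density_pos (G : GCDGraph) (hδ : 0 < G.density) :
    0 < muSet G.mu G.V ∧ 0 < muSet G.mu G.W := by
  have hVW : muSet G.mu G.V * muSet G.mu G.W ≠ 0 := fun h => by
    simp [density, densityRaw, h] at hδ
  exact ⟨(muSet_nonneg G.mu_nonneg _).lt_of_ne' (left_ne_zero_of_mul hVW),
    (muSet_nonneg G.mu_nonneg _).lt_of_ne' (right_ne_zero_of_mul hVW)⟩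

lemma quality_pos {τ : ℝ} (hτ : 0 ≤ τ) (G : GCDGraph) (hδ : 0 < G.density) :
    0 < quality τ G := by
  obtain ⟨hV, hW⟩ := G.muSet_pos_of_density_pos hδ
  have := Real.rpow_pos_of_pos hδ (2 + τ)
  have := prod_localFactor_pos hτ G
  rw [quality, qualityRaw_eq]
  positivity

lemma rpow_mul_quality_le_quality_filterEdges {τ l : ℝ} (hτ : 0 ≤ τ) (G : GCDGraph)
    (q : ℕ × ℕ → Prop) [DecidablePred q] (hl : 0 ≤ l)
    (h : l * muEdges G.mu G.E ≤ muEdges G.mu (G.E.filter q)) :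
    l ^ (2 + τ) * quality τ G ≤ quality τ (G.filterEdges q) := by
  have hmu := G.mu_nonneg
  have hVW := mul_nonneg (muSet_nonneg hmu G.V) (muSet_nonneg hmu G.W)
  have hΦ := (prod_localFactor_pos hτ G).le
  set d := densityRaw G.mu G.V G.W G.E
  set d' := densityRaw G.mu G.V G.W (G.E.filter q)
  have hd₀ : 0 ≤ d := densityRaw_nonneg hmu _ _ _
  have hd : l * d ≤ d' := by
    simp only [d, d', densityRaw, ← mul_div_assoc]
    exact div_le_div_of_nonneg_right h hVW
  change l ^ (2 + τ) * (d ^ (2 + τ) * _ * _ * _)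
    ≤ d' ^ (2 + τ) * muSet G.mu G.V * muSet G.mu G.W * ∏ p ∈ G.P, localFactor τ G.f G.g p
  calc l ^ (2 + τ) * (d ^ (2 + τ) * muSet G.mu G.V * muSet G.mu G.W
        * ∏ p ∈ G.P, localFactor τ G.f G.g p)
      = (l * d) ^ (2 + τ) * (muSet G.mu G.V * muSet G.mu G.W
          * ∏ p ∈ G.P, localFactor τ G.f G.g p) := by rw [Real.mul_rpow hl hd₀]; ring
    _ ≤ d' ^ (2 + τ) * (muSet G.mu G.V * muSet G.mu G.W
          * ∏ p ∈ G.P, localFactor τ G.f G.g p) := by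
        gcongr
    _ = _ := by ring

end GCDGraph

theorem cosmetic_L_general (τ M : ℝ) (hτ : τ ∈ Set.Ioo (0 : ℝ) (1 / 100)) (hM : 2 ≤ M)
    (G : GCDGraph) (hδ : 0 < G.density)
    (s t : ℝ) (hs : 1 ≤ s) (ht : C6 τ M * s ≤ t)
    (hflat : Rflat τ M G = ∅)
    (hE : ∀ e ∈ G.E, 1 / s ≤ Lfun t e.1 e.2) :
    ∃ G' : GCDGraph, IsSubgraph G' G ∧
      G'.V = G.V ∧ G'.W = G.W ∧ G'.E ⊆ G.E ∧ G'.P = G.P ∧ G'.f = G.f ∧ G'.g = G.g ∧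
      quality τ G / 2 ≤ quality τ G' ∧ 0 < quality τ G / 2 ∧
      ∀ e ∈ G'.E, 1 / (2 * s) ≤ LfunRes t (R G) e.1 e.2 := by
  classical
  obtain ⟨hτ₀, hτ₁⟩ := hτ
  obtain ⟨hV, hW⟩ := G.muSet_pos_of_density_pos hδ
  have hq := G.quality_pos hτ₀.le hδ
  have ht' : 10 ^ 4 * M * C2 τ M * s ≤ t :=
    le_trans (by gcongr; exact le_max_of_le_right (le_max_left _ _)) ht
  set good : ℕ × ℕ → Prop := fun e => 1 / (2 * s) ≤ LfunRes t (R G) e.1 e.2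
  have hbad := G.muEdges_filter_LfunRes_lt_le hτ₀ (by linarith) (by linarith) hV hW
    (Set.sdiff_eq_empty.1 hflat) hs ht' hE
  have hgood : 99 / 100 * muEdges G.mu G.E ≤ muEdges G.mu (G.E.filter good) := by
    have hsplit := sum_filter_add_sum_filter_not G.E good fun e => G.mu e.1 * G.mu e.2
    simp only [good, not_le] at hsplit
    rw [muEdges, muEdges] at hbad ⊢
    linarith
  have hhalf : (1 : ℝ) / 2 ≤ (99 / 100) ^ (2 + τ) :=
    calc (1 : ℝ) / 2 ≤ (99 / 100) ^ (3 : ℝ) := by norm_num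
      _ ≤ (99 / 100) ^ (2 + τ) :=
        Real.rpow_le_rpow_of_exponent_ge (by norm_num) (by norm_num) (by linarith)
  refine ⟨G.filterEdges good, G.filterEdges_isSubgraph good, rfl, rfl, filter_subset _ _, rfl,
    rfl, rfl, ?_, half_pos hq, fun e he => (mem_filter.1 he).2⟩
  calc quality τ G / 2 ≤ (99 / 100) ^ (2 + τ) * quality τ G := by nlinarith
    _ ≤ quality τ (G.filterEdges good) :=
      G.rpow_mul_quality_le_quality_filterEdges hτ₀.le good (by norm_num) hgood

/-- Removing the effect of `R(G)` from `L_t(v,w)` (`Cosmetic-L`). -/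
theorem cosmetic_L (τ M : ℝ) (hτ : τ ∈ Set.Ioo (0 : ℝ) (1 / 100)) (hM : 2 ≤ M)
    (G : GCDGraph) (hmax : IsMaximal τ G) (hδ : 0 < G.density)
    (s t : ℝ) (hs : 1 ≤ s) (ht : C6 τ M * s ≤ t)
    (hflat : Rflat τ M G = ∅)
    (hE : ∀ e ∈ G.E, 1 / s ≤ Lfun t e.1 e.2) :
    ∃ G' : GCDGraph, IsSubgraph G' G ∧
      G'.V = G.V ∧ G'.W = G.W ∧ G'.E ⊆ G.E ∧ G'.P = G.P ∧ G'.f = G.f ∧ G'.g = G.g ∧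
      quality τ G / 2 ≤ quality τ G' ∧ 0 < quality τ G / 2 ∧
      ∀ e ∈ G'.E, 1 / (2 * s) ≤ LfunRes t (R G) e.1 e.2 :=
  cosmetic_L_general τ M hτ hM G hδ s t hs ht hflat hE
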